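/- Let ψ: F → H be surjective with kernel M and set M_p = [M,M]·M^{[p]}. Then Ψ_p induces a group isomorphism F/M_p ≅ Ψ_p(F). Moreover, Ψ_p(M) is contained in the abelian normal subgroup ((ℤ/pℤ)^H)^e of (W_p)^e, and the induced isomorphism M/M_p → Ψ_p(M) is H-equivariant: for f ∈ F with ψ(f) = h, it carries the conjugation action of f on M/M_p to the conjugation action of Ψ_p(f) on Ψ_p(M). -/

import Mathlib

/-- The underlying set of the wreath-product-like group `H ⋉ Aᴴ`, in which
`(a, v) * (b, w) = (a * b, v^b + w)` where `(v^b) g = v (g * b⁻¹)`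
(so that the indicator function of `g` is sent by `b` to the indicator function of `g * b`). -/
def Wr (H A : Type*) : Type _ := H × (H → A)

namespace Wr

variable {H A : Type*} [Group H] [AddCommGroup A]

instance : Mul (Wr H A) := ⟨fun x y => ⟨x.1 * y.1, (fun g => x.2 (g * y.1⁻¹)) + y.2⟩⟩
instance : One (Wr H A) := ⟨⟨1, 0⟩⟩
instance : Inv (Wr H A) := ⟨fun x => ⟨x.1⁻¹, fun g => -(x.2 (g * x.1))⟩⟩

theorem mul_def (x y : Wr H A) :
    x * y = ⟨x.1 * y.1, (fun g => x.2 (g * y.1⁻¹)) + y.2⟩ := rfl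
theorem one_def : (1 : Wr H A) = ⟨1, 0⟩ := rfl
theorem inv_def (x : Wr H A) : x⁻¹ = ⟨x.1⁻¹, fun g => -(x.2 (g * x.1))⟩ := rfl

theorem ext' {x y : Wr H A} (h1 : x.1 = y.1) (h2 : x.2 = y.2) : x = y := Prod.ext h1 h2

instance : Group (Wr H A) where
  mul := (· * ·)
  one := 1
  inv := (·⁻¹)
  mul_assoc x y z := by
    refine ext' (mul_assoc _ _ _) ?_
    show (fun g => ((fun g' => x.2 (g' * y.1⁻¹)) + y.2) (g * z.1⁻¹)) + z.2
        = (fun g => x.2 (g * (y.1 * z.1)⁻¹)) + ((fun g => y.2 (g * z.1⁻¹)) + z.2)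
    funext g
    simp [mul_inv_rev, mul_assoc, add_assoc]
  one_mul x := by
    refine ext' (one_mul _) ?_
    show (fun g => (0 : H → A) (g * x.1⁻¹)) + x.2 = x.2
    funext g
    simp
  mul_one x := by
    refine ext' (mul_one _) ?_
    show (fun g => x.2 (g * (1 : H)⁻¹)) + 0 = x.2
    funext g
    simp
  inv_mul_cancel x := by
    refine ext' (inv_mul_cancel _) ?_
    show (fun g => (fun g' => -(x.2 (g' * x.1))) (g * x.1⁻¹)) + x.2 = 0
    funext g
    simp [mul_assoc]

end Wr

open scoped commutatorElement

/-- For a subgroup `N` of `F`, `subgroupP p N = [N,N]·N^{[p]}` is the subgroup generated by all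
commutators `⁅a,b⁆` with `a b ∈ N` and all `p`-th powers `a ^ p` with `a ∈ N`. -/
def subgroupP (p : ℕ) {F : Type*} [Group F] (N : Subgroup F) : Subgroup F :=
  Subgroup.closure ({x | ∃ a ∈ N, ∃ b ∈ N, x = ⁅a, b⁆} ∪ {x | ∃ a ∈ N, x = a ^ p})

/-- If `N` is normal in `F`, then so is `subgroupP p N`. -/
instance subgroupP_normal (p : ℕ) {F : Type*} [Group F] (N : Subgroup F) [hN : N.Normal] :
    (subgroupP p N).Normal := by
  constructor
  intro n hn g
  have h1 : (subgroupP p N).map (MulAut.conj g).toMonoidHom ≤ subgroupP p N := by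
    rw [subgroupP, MonoidHom.map_closure]
    apply Subgroup.closure_mono
    rintro x ⟨y, hy, rfl⟩
    rcases hy with ⟨a, ha, b, hb, rfl⟩ | ⟨a, ha, rfl⟩
    · exact Or.inl ⟨g * a * g⁻¹, hN.conj_mem a ha g, g * b * g⁻¹, hN.conj_mem b hb g,
        by simp [map_commutatorElement]⟩
    · exact Or.inr ⟨g * a * g⁻¹, hN.conj_mem a ha g, by simp [map_pow]⟩
  exact h1 ⟨n, hn, rfl⟩

/-! `Ψp` is the family of coordinate projections of the mod-`p` Magnus homomorphism
`F → H ≀ 𝔽_pᵉ`, `x_j ↦ (ψ x_j, δ₁ ⊗ δ_j)`. Convolving its base coordinate with the values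
`c(x_k, ·)` of the cocycle `c(f, g) = s(g ψ(f)⁻¹) f s(g)⁻¹` of a section `s` of `ψ` gives the
Krasner–Kaloujnine homomorphism `F → H ≀ (M/M_p)`, `f ↦ (ψ f, c(f, ·))`, whose kernel is `M_p`
because `c(f, 1)` is conjugate to `f` when `ψ f = 1`; hence `ker Ψp ≤ M_p`. Conversely `Ψp` maps
`M` into the base group, which is abelian of exponent `p`, so `M_p ≤ ker Ψp`. Equivariance is
the fact that `M` acts trivially by conjugation on `M/M_p`. -/

namespace Wr

variable {H A B : Type*} [Group H] [AddCommGroup A] [AddCommGroup B]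

def fstHom : Wr H A →* H where
  toFun x := x.1
  map_one' := rfl
  map_mul' _ _ := rfl

def inr : Multiplicative (H → A) →* Wr H A where
  toFun v := ⟨1, v.toAdd⟩
  map_one' := rfl
  map_mul' v w := ext' (mul_one 1).symm (by
    change v.toAdd + w.toAdd = (fun g => v.toAdd (g * 1⁻¹)) + w.toAdd
    simp)

theorem eq_inr_of_fst_eq_one {x : Wr H A} (hx : x.1 = 1) : x = inr (.ofAdd x.2) :=
  ext' hx rfl

theorem pow_eq_one_of_fst_eq_one {n : ℕ} (hn : ∀ a : A, n • a = 0) {x : Wr H A} (hx : x.1 = 1) :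
    x ^ n = 1 := by
  rw [eq_inr_of_fst_eq_one hx, ← map_pow, ← ofAdd_nsmul]
  convert map_one inr
  funext g
  exact hn _

theorem commute_of_fst_eq_one {x y : Wr H A} (hx : x.1 = 1) (hy : y.1 = 1) : Commute x y := by
  rw [eq_inr_of_fst_eq_one hx, eq_inr_of_fst_eq_one hy]
  exact (Commute.all _ _).map inr

def map (φ : (H → A) →+ (H → B)) (hφ : ∀ b v, φ (fun g => v (g * b)) = fun g => φ v (g * b)) :
    Wr H A →* Wr H B where
  toFun x := ⟨x.1, φ x.2⟩
  map_one' := ext' rfl (map_zero φ)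
  map_mul' x y := ext' rfl (by
    change φ ((fun g => x.2 (g * y.1⁻¹)) + y.2) = (fun g => φ x.2 (g * y.1⁻¹)) + φ y.2
    rw [map_add, hφ])


def mapPointwise (φ : A →+ B) : Wr H A →* Wr H B := map (φ.compLeft H) fun _ _ => rfl


theorem pi_mapPointwise_eval_injective {ι : Type*} [Nonempty ι] :
    Function.Injective (MonoidHom.pi fun k =>
      mapPointwise (H := H) (Pi.evalAddMonoidHom (fun _ : ι => A) k)) := by
  intro x y h
  have hk (k : ι) :
      mapPointwise (Pi.evalAddMonoidHom _ k) x = mapPointwise (Pi.evalAddMonoidHom _ k) y :=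
    congrFun h k
  obtain ⟨k⟩ := ‹Nonempty ι›
  exact ext' (congrArg (fun z => z.1) (hk k))
    (funext fun g => funext fun k => congrFun (congrArg (fun z => z.2) (hk k)) g)

section convolution

variable [Fintype H]

def convolution (χ : H → A →+ B) : (H → A) →+ (H → B) where
  toFun v g := ∑ h, χ (g * h⁻¹) (v h)
  map_zero' := by funext g; simp
  map_add' v w := by funext g; simp [Finset.sum_add_distrib]

theorem convolution_apply (χ : H → A →+ B) (v : H → A) (g : H) :
    convolution χ v g = ∑ h, χ (g * h⁻¹) (v h) := rfl

theorem convolution_translate (χ : H → A →+ B) (b : H) (v : H → A) :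
    convolution χ (fun g => v (g * b)) = fun g => convolution χ v (g * b) := by
  funext g
  refine Fintype.sum_equiv (Equiv.mulRight b) _ _ fun h => ?_
  simp [mul_assoc]

theorem convolution_single [DecidableEq H] (χ : H → A →+ B) (a : A) :
    convolution χ (Pi.single 1 a) = fun g => χ g a := by
  funext g
  rw [convolution_apply, Fintype.sum_eq_single 1 fun h hh => by simp [hh]]
  simp

end convolution

end Wr

open scoped IsMulCommutative

section subgroupP

variable {F : Type*} [Group F] (p : ℕ) {N : Subgroup F}

theorem commutator_mem_subgroupP {a b : F} (ha : a ∈ N) (hb : b ∈ N) : ⁅a, b⁆ ∈ subgroupP p N :=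
  Subgroup.subset_closure (Or.inl ⟨a, ha, b, hb, rfl⟩)

theorem pow_mem_subgroupP {a : F} (ha : a ∈ N) : a ^ p ∈ subgroupP p N :=
  Subgroup.subset_closure (Or.inr ⟨a, ha, rfl⟩)

theorem subgroupP_le_ker {G : Type*} [Group G] {φ : F →* G}
    (hcomm : ∀ a ∈ N, ∀ b ∈ N, Commute (φ a) (φ b)) (hpow : ∀ a ∈ N, φ a ^ p = 1) :
    subgroupP p N ≤ φ.ker := by
  rw [subgroupP, Subgroup.closure_le]
  rintro x (⟨a, ha, b, hb, rfl⟩ | ⟨a, ha, rfl⟩)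
  · rw [SetLike.mem_coe, MonoidHom.mem_ker, map_commutatorElement,
      commutatorElement_eq_one_iff_mul_comm]
    exact hcomm a ha b hb
  · rw [SetLike.mem_coe, MonoidHom.mem_ker, map_pow]
    exact hpow a ha

theorem map_conj_eq_of_subgroupP_le_ker {G : Type*} [Group G] {φ : F →* G}
    (hφ : subgroupP p N ≤ φ.ker) {a b : F} (ha : a ∈ N) (hb : b ∈ N) :
    φ (a * b * a⁻¹) = φ b := by
  have hab : a * b * a⁻¹ = ⁅a, b⁆ * b := by rw [commutatorElement_def]; group
  rw [hab, map_mul, hφ (commutator_mem_subgroupP p ha hb), one_mul]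

variable (N) [N.Normal]

def relationModule : Subgroup (F ⧸ subgroupP p N) := N.map (QuotientGroup.mk' _)

instance : IsMulCommutative (relationModule p N) := by
  refine IsMulCommutative.of_setLike_mul_comm ?_
  rintro _ ⟨a, ha, rfl⟩ _ ⟨b, hb, rfl⟩
  rw [← map_mul, ← map_mul, QuotientGroup.mk'_apply, QuotientGroup.mk'_apply, QuotientGroup.eq]
  have hab : (a * b)⁻¹ * (b * a) = ⁅b⁻¹, a⁻¹⁆ := by rw [commutatorElement_def]; group
  rw [hab]
  exact commutator_mem_subgroupP p (inv_mem hb) (inv_mem ha)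

theorem relationModule_pow_eq_one (x : relationModule p N) : x ^ p = 1 := by
  obtain ⟨_, a, ha, rfl⟩ := x
  rw [Subtype.ext_iff, SubgroupClass.coe_pow, ← map_pow, OneMemClass.coe_one,
    QuotientGroup.mk'_apply, QuotientGroup.eq_one_iff]
  exact pow_mem_subgroupP p ha

noncomputable instance : Module (ZMod p) (Additive (relationModule p N)) :=
  AddCommGroup.zmodModule fun x => by
    rw [← ofMul_toMul x, ← ofMul_pow, relationModule_pow_eq_one, ofMul_one]

end subgroupP

section KrasnerKaloujnine

variable {F H : Type*} [Group F] [Group H] (p : ℕ) {ψ : F →* H} {s : H → F}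

def transversalCocycle (hs : Function.RightInverse s ψ) (f : F) (g : H) :
    relationModule p ψ.ker :=
  ⟨QuotientGroup.mk' _ (s (g * (ψ f)⁻¹) * f * (s g)⁻¹), _, by simp [MonoidHom.mem_ker, hs _], rfl⟩

theorem coe_transversalCocycle (hs : Function.RightInverse s ψ) (f : F) (g : H) :
    (transversalCocycle p hs f g : F ⧸ subgroupP p ψ.ker) = ↑(s (g * (ψ f)⁻¹) * f * (s g)⁻¹) :=
  rfl

theorem transversalCocycle_one (hs : Function.RightInverse s ψ) (g : H) :
    transversalCocycle p hs 1 g = 1 := by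
  ext
  simp [coe_transversalCocycle]

theorem transversalCocycle_mul (hs : Function.RightInverse s ψ) (u v : F) (g : H) :
    transversalCocycle p hs (u * v) g =
      transversalCocycle p hs u (g * (ψ v)⁻¹) * transversalCocycle p hs v g := by
  ext
  simp only [Subgroup.coe_mul, coe_transversalCocycle, ← QuotientGroup.mk_mul, map_mul]
  congr 1
  group

def krasnerKaloujnine (hs : Function.RightInverse s ψ) :
    F →* Wr H (Additive (relationModule p ψ.ker)) where
  toFun f := ⟨ψ f, fun g => .ofMul (transversalCocycle p hs f g)⟩
  map_one' := Wr.ext' (map_one ψ) (funext fun g => by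
    change Additive.ofMul (transversalCocycle p hs 1 g) = 0
    rw [transversalCocycle_one, ofMul_one])
  map_mul' u v := Wr.ext' (map_mul ψ u v) (funext fun g => by
    change Additive.ofMul (transversalCocycle p hs (u * v) g) =
      .ofMul (transversalCocycle p hs u (g * (ψ v)⁻¹)) + .ofMul (transversalCocycle p hs v g)
    rw [transversalCocycle_mul, ofMul_mul])

theorem ker_krasnerKaloujnine_le (hs : Function.RightInverse s ψ) :
    (krasnerKaloujnine p hs).ker ≤ subgroupP p ψ.ker := by
  intro f hf
  have hψf : ψ f = 1 := congrArg Prod.fst hf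
  have hc : transversalCocycle p hs f 1 = 1 := congrFun (congrArg Prod.snd hf) 1
  rw [Subtype.ext_iff, coe_transversalCocycle, hψf, OneMemClass.coe_one,
    QuotientGroup.eq_one_iff, mul_inv_cancel] at hc
  simpa [mul_assoc] using (subgroupP_normal p ψ.ker).conj_mem _ hc (s 1)⁻¹

end KrasnerKaloujnine

section Magnus

variable {e : ℕ} (p : ℕ) {H : Type*} [Group H] [DecidableEq H] (ψ : FreeGroup (Fin e) →* H)

def magnusHom : FreeGroup (Fin e) →* Wr H (Fin e → ZMod p) :=
  FreeGroup.lift fun j => ⟨ψ (.of j), Pi.single 1 (Pi.single j 1)⟩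

theorem magnusHom_of (j : Fin e) :
    magnusHom p ψ (.of j) = ⟨ψ (.of j), Pi.single 1 (Pi.single j 1)⟩ :=
  FreeGroup.lift_apply_of

theorem fst_magnusHom (f : FreeGroup (Fin e)) : (magnusHom p ψ f).1 = ψ f := by
  have h : Wr.fstHom.comp (magnusHom p ψ) = ψ :=
    FreeGroup.ext_hom _ _ fun j => by rw [MonoidHom.comp_apply, magnusHom_of]; rfl
  exact DFunLike.congr_fun h f

theorem subgroupP_le_ker_magnusHom : subgroupP p ψ.ker ≤ (magnusHom p ψ).ker := by
  have hfst : ∀ a ∈ ψ.ker, (magnusHom p ψ a).1 = 1 := fun a ha => by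
    rw [fst_magnusHom, MonoidHom.mem_ker.mp ha]
  exact subgroupP_le_ker p (fun a ha b hb => Wr.commute_of_fst_eq_one (hfst a ha) (hfst b hb))
    fun a ha => Wr.pow_eq_one_of_fst_eq_one (ZModModule.char_nsmul_eq_zero p) (hfst a ha)

theorem krasnerKaloujnine_eq_comp_magnusHom [Fintype H] {s : H → FreeGroup (Fin e)}
    (hs : Function.RightInverse s ψ) :
    krasnerKaloujnine p hs = (Wr.map (Wr.convolution fun g =>
      (Fintype.linearCombination (ZMod p) fun k =>
        Additive.ofMul (transversalCocycle p hs (.of k) g)).toAddMonoidHom)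
      (Wr.convolution_translate _)).comp (magnusHom p ψ) := by
  refine FreeGroup.ext_hom _ _ fun j => ?_
  rw [MonoidHom.comp_apply, magnusHom_of]
  refine Wr.ext' rfl ?_
  change (fun g => Additive.ofMul (transversalCocycle p hs (.of j) g)) =
    Wr.convolution _ (Pi.single 1 (Pi.single j 1))
  rw [Wr.convolution_single]
  funext g
  simp

theorem ker_magnusHom [Finite H] (hψ : Function.Surjective ψ) :
    (magnusHom p ψ).ker = subgroupP p ψ.ker := by
  have := Fintype.ofFinite H
  refine le_antisymm (fun f hf => ?_) (subgroupP_le_ker_magnusHom p ψ)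
  refine ker_krasnerKaloujnine_le p (Function.rightInverse_surjInv hψ) ?_
  rw [MonoidHom.mem_ker, krasnerKaloujnine_eq_comp_magnusHom, MonoidHom.comp_apply,
    MonoidHom.mem_ker.mp hf, map_one]

theorem eq_pi_magnusHom (Ψp : FreeGroup (Fin e) →* (Fin e → Wr H (ZMod p)))
    (hΨp : ∀ j k, Ψp (FreeGroup.of j) k =
        (ψ (FreeGroup.of j), if k = j then Pi.single (1 : H) (1 : ZMod p) else 0)) :
    Ψp = MonoidHom.pi fun k =>
      (Wr.mapPointwise (Pi.evalAddMonoidHom (fun _ => ZMod p) k)).comp (magnusHom p ψ) := by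
  refine FreeGroup.ext_hom _ _ fun j => funext fun k => ?_
  rw [hΨp, MonoidHom.pi_apply, MonoidHom.comp_apply, magnusHom_of]
  refine Wr.ext' rfl (funext fun g => ?_)
  change (if k = j then Pi.single 1 1 else 0 : H → ZMod p) g =
    (Pi.single (1 : H) (Pi.single j 1) : H → Fin e → ZMod p) g k
  by_cases hg : g = 1 <;> by_cases hk : k = j <;> simp [hg, hk]

theorem ker_pi_mapPointwise_comp_magnusHom :
    (MonoidHom.pi fun k =>
      (Wr.mapPointwise (Pi.evalAddMonoidHom (fun _ => ZMod p) k)).comp (magnusHom p ψ)).ker =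
      (magnusHom p ψ).ker := by
  rcases isEmpty_or_nonempty (Fin e) with he | he
  · exact Subsingleton.elim _ _
  exact MonoidHom.ker_comp_of_injective _ _ Wr.pi_mapPointwise_eval_injective

end Magnus

theorem stmt_13_general (e p : ℕ) (H : Type) [Group H] [Finite H] [DecidableEq H]
    (ψ : FreeGroup (Fin e) →* H) (hψ : Function.Surjective ψ)
    (Ψp : FreeGroup (Fin e) →* (Fin e → Wr H (ZMod p)))
    (hΨp : ∀ j k, Ψp (FreeGroup.of j) k =
        (ψ (FreeGroup.of j), if k = j then Pi.single (1 : H) (1 : ZMod p) else 0)) :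
    (∃ ι : (FreeGroup (Fin e) ⧸ subgroupP p ψ.ker) ≃* Ψp.range,
        ∀ w : FreeGroup (Fin e), (ι (QuotientGroup.mk w)).val = Ψp w) ∧
    (∀ m ∈ ψ.ker, ∀ k, ((Ψp m) k).1 = 1) ∧
    (∀ f₁ f₂ : FreeGroup (Fin e), ψ f₁ = ψ f₂ →
      ∀ m ∈ ψ.ker, Ψp (f₁ * m * f₁⁻¹) = Ψp (f₂ * m * f₂⁻¹)) := by
  have hΨ := eq_pi_magnusHom p ψ Ψp hΨp
  have hker : Ψp.ker = subgroupP p ψ.ker := by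
    rw [hΨ, ker_pi_mapPointwise_comp_magnusHom, ker_magnusHom p ψ hψ]
  have hfst (f : FreeGroup (Fin e)) (k : Fin e) : (Ψp f k).1 = ψ f := by
    rw [hΨ]
    exact fst_magnusHom p ψ f
  refine ⟨⟨(QuotientGroup.quotientMulEquivOfEq hker.symm).trans
      (QuotientGroup.quotientKerEquivRange Ψp), fun w => rfl⟩,
    fun m hm k => (hfst m k).trans hm, fun f₁ f₂ h m hm => ?_⟩
  have hn : f₁⁻¹ * f₂ ∈ ψ.ker := by simp [MonoidHom.mem_ker, h]
  calc Ψp (f₁ * m * f₁⁻¹)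
      = Ψp f₁ * Ψp ((f₁⁻¹ * f₂) * m * (f₁⁻¹ * f₂)⁻¹) * Ψp f₁⁻¹ := by
        rw [map_conj_eq_of_subgroupP_le_ker p hker.ge hn hm, map_mul, map_mul]
    _ = Ψp (f₂ * m * f₂⁻¹) := by
        rw [← map_mul, ← map_mul]
        group

/-- `Ψ_p` (characterized by its generator values) induces an isomorphism
`F ⧸ M_p ≃ Ψ_p(F)`; the image `Ψ_p(M)` lies in the abelian normal subgroup
`((ℤ/p)ᴴ)^e` (i.e. all its first components are trivial); and the induced isomorphism is
`H`-equivariant: the conjugation action of `f ∈ F` on `Ψ_p(M)` depends only on `ψ f`. -/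
theorem stmt_13 (e p : ℕ) (hp : p.Prime) (H : Type) [Group H] [Finite H] [DecidableEq H]
    (ψ : FreeGroup (Fin e) →* H) (hψ : Function.Surjective ψ)
    (Ψp : FreeGroup (Fin e) →* (Fin e → Wr H (ZMod p)))
    (hΨp : ∀ j k, Ψp (FreeGroup.of j) k =
        (ψ (FreeGroup.of j), if k = j then Pi.single (1 : H) (1 : ZMod p) else 0)) :
    (∃ ι : (FreeGroup (Fin e) ⧸ subgroupP p ψ.ker) ≃* Ψp.range,
        ∀ w : FreeGroup (Fin e), (ι (QuotientGroup.mk w)).val = Ψp w) ∧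
    (∀ m ∈ ψ.ker, ∀ k, ((Ψp m) k).1 = 1) ∧
    (∀ f₁ f₂ : FreeGroup (Fin e), ψ f₁ = ψ f₂ →
      ∀ m ∈ ψ.ker, Ψp (f₁ * m * f₁⁻¹) = Ψp (f₂ * m * f₂⁻¹)) :=
  stmt_13_general e p H ψ hψ Ψp hΨp
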